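/- Assume each U_t is unitary and Assumption C holds. Then for every n ≥ 3, all u_i, v_i ∈ h and all ε_i ∈ {0,1} (i = 1,…,n): lim_{t→0} (1/t)·⟨Ω, (U_t^{(ε₁)} − 1)(u₁,v₁)·(U_t^{(ε₂)} − 1)(u₂,v₂) ⋯ (U_t^{(ε_n)} − 1)(u_n,v_n)·Ω⟩ = 0. -/

import Mathlib

/-!
Write `A_p = (U_t^{(ε)} - 1)(u, v)` for `p = (ε, u, v)`. For unitary `V` one has
`‖(V - 1) x‖ ^ 2 = -2 re ⟪x, (V - 1) x⟫`; taking `x = v ⊗ A_q Ω` bounds `‖A_p A_q Ω‖ ^ 2` by a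
three-point function `⟪Ω, A_q* A_{(ε, v, v)} A_q Ω⟫`, so `‖A_p A_q Ω‖ ^ 2 = o(t)` by Assumption C.
For `n ≥ 4` the expectation `⟪Ω, A_a A_b M A_c A_d Ω⟫` is `⟪(A_a A_b)* Ω, M A_c A_d Ω⟫` with `‖M‖`
bounded uniformly in `t`, hence `o(t)` by Cauchy–Schwarz; for `n = 3` it is Assumption C itself.
-/

open scoped ComplexInnerProductSpace
open ContinuousLinearMap Filter Topology

theorem List.exists_eq_cons_cons_append_pair {α : Type*} {l : List α} (hl : 4 ≤ l.length) :
    ∃ a b c d m, l = a :: b :: (m ++ [c, d]) := by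
  obtain _ | ⟨a, _ | ⟨b, r⟩⟩ := l
  · simp at hl
  · simp at hl
  have hr : (r.drop (r.length - 2)).length = 2 := by simp at hl ⊢; omega
  obtain ⟨c, d, hcd⟩ := List.length_eq_two.mp hr
  exact ⟨a, b, c, d, r.take (r.length - 2), by rw [← hcd, List.take_append_drop]⟩

theorem Complex.norm_one_div_ofReal_mul {t : ℝ} (ht : 0 ≤ t) (z : ℂ) :
    ‖(1 / (t : ℂ)) * z‖ = 1 / t * ‖z‖ := by
  rw [norm_mul, norm_div, norm_one, Complex.norm_real, Real.norm_of_nonneg ht]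

section Slice

variable {h H E : Type*}
  [NormedAddCommGroup h] [InnerProductSpace ℂ h]
  [NormedAddCommGroup H] [InnerProductSpace ℂ H]
  [NormedAddCommGroup E] [InnerProductSpace ℂ E]
  {tmul : h →ₗ[ℂ] H →ₗ[ℂ] E} {opAt : (E →L[ℂ] E) → h → h → (H →L[ℂ] H)}

theorem norm_tmul (htmul : ∀ (u v : h) (ξ ζ : H), ⟪tmul u ξ, tmul v ζ⟫ = ⟪u, v⟫ * ⟪ξ, ζ⟫)
    (u : h) (ξ : H) : ‖tmul u ξ‖ = ‖u‖ * ‖ξ‖ := by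
  have hsq : ‖tmul u ξ‖ ^ 2 = (‖u‖ * ‖ξ‖) ^ 2 := by
    rw [← inner_self_eq_norm_sq (𝕜 := ℂ), htmul, mul_pow, ← inner_self_eq_norm_sq (𝕜 := ℂ),
      ← inner_self_eq_norm_sq (𝕜 := ℂ), inner_self_eq_norm_sq_to_K, inner_self_eq_norm_sq_to_K]
    norm_cast
  exact (pow_left_inj₀ (norm_nonneg _) (by positivity) two_ne_zero).mp hsq

theorem norm_opAt_apply_le
    (htmul : ∀ (u v : h) (ξ ζ : H), ⟪tmul u ξ, tmul v ζ⟫ = ⟪u, v⟫ * ⟪ξ, ζ⟫)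
    (hopAt : ∀ (A : E →L[ℂ] E) (u v : h) (ξ₁ ξ₂ : H),
      ⟪ξ₁, opAt A u v ξ₂⟫ = ⟪tmul u ξ₁, A (tmul v ξ₂)⟫)
    (A : E →L[ℂ] E) (u v : h) (ξ : H) : ‖opAt A u v ξ‖ ≤ ‖u‖ * ‖A (tmul v ξ)‖ := by
  set y := opAt A u v ξ
  rcases (norm_nonneg y).eq_or_lt with hy | hy
  · rw [← hy]; positivity
  refine le_of_mul_le_mul_right ?_ hy
  calc ‖y‖ * ‖y‖ = RCLike.re ⟪y, y⟫ := (inner_self_eq_norm_mul_norm (𝕜 := ℂ) y).symm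
    _ ≤ ‖⟪y, y⟫‖ := RCLike.re_le_norm _
    _ = ‖⟪tmul u y, A (tmul v ξ)⟫‖ := by rw [hopAt]
    _ ≤ ‖tmul u y‖ * ‖A (tmul v ξ)‖ := norm_inner_le_norm _ _
    _ = ‖u‖ * ‖A (tmul v ξ)‖ * ‖y‖ := by rw [norm_tmul htmul]; ring

theorem norm_opAt_le
    (htmul : ∀ (u v : h) (ξ ζ : H), ⟪tmul u ξ, tmul v ζ⟫ = ⟪u, v⟫ * ⟪ξ, ζ⟫)
    (hopAt : ∀ (A : E →L[ℂ] E) (u v : h) (ξ₁ ξ₂ : H),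
      ⟪ξ₁, opAt A u v ξ₂⟫ = ⟪tmul u ξ₁, A (tmul v ξ₂)⟫)
    (A : E →L[ℂ] E) (u v : h) : ‖opAt A u v‖ ≤ ‖u‖ * ‖A‖ * ‖v‖ := by
  refine opNorm_le_bound _ (by positivity) fun ξ => ?_
  calc ‖opAt A u v ξ‖ ≤ ‖u‖ * ‖A (tmul v ξ)‖ := norm_opAt_apply_le htmul hopAt A u v ξ
    _ ≤ ‖u‖ * (‖A‖ * ‖tmul v ξ‖) := by gcongr; exact A.le_opNorm _
    _ = ‖u‖ * ‖A‖ * ‖v‖ * ‖ξ‖ := by rw [norm_tmul htmul]; ring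

theorem inner_opAt_adjoint_apply [CompleteSpace E]
    (hopAt : ∀ (A : E →L[ℂ] E) (u v : h) (ξ₁ ξ₂ : H),
      ⟪ξ₁, opAt A u v ξ₂⟫ = ⟪tmul u ξ₁, A (tmul v ξ₂)⟫)
    (A : E →L[ℂ] E) (u v : h) (ξ ζ : H) :
    ⟪opAt (adjoint A) v u ξ, ζ⟫ = ⟪ξ, opAt A u v ζ⟫ := by
  rw [← inner_conj_symm, hopAt, adjoint_inner_right, inner_conj_symm, hopAt]

theorem norm_sub_one_apply_sq {V : E →L[ℂ] E} (hV : ∀ x, ‖V x‖ = ‖x‖) (x : E) :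
    ‖(V - 1) x‖ ^ 2 = -2 * RCLike.re ⟪x, (V - 1) x⟫ := by
  rw [sub_apply, one_apply_eq_self, norm_sub_sq (𝕜 := ℂ), hV, inner_sub_right, map_sub,
    inner_re_symm (𝕜 := ℂ) x, inner_self_eq_norm_sq (𝕜 := ℂ)]
  ring

theorem norm_opAt_sub_one_apply_sq_le
    (htmul : ∀ (u v : h) (ξ ζ : H), ⟪tmul u ξ, tmul v ζ⟫ = ⟪u, v⟫ * ⟪ξ, ζ⟫)
    (hopAt : ∀ (A : E →L[ℂ] E) (u v : h) (ξ₁ ξ₂ : H),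
      ⟪ξ₁, opAt A u v ξ₂⟫ = ⟪tmul u ξ₁, A (tmul v ξ₂)⟫)
    {V : E →L[ℂ] E} (hV : ∀ x, ‖V x‖ = ‖x‖) (u v : h) (η : H) :
    ‖opAt (V - 1) u v η‖ ^ 2 ≤ 2 * ‖u‖ ^ 2 * ‖⟪η, opAt (V - 1) v v η⟫‖ := by
  calc ‖opAt (V - 1) u v η‖ ^ 2 ≤ (‖u‖ * ‖(V - 1) (tmul v η)‖) ^ 2 := by
        gcongr; exact norm_opAt_apply_le htmul hopAt _ u v η
    _ = 2 * ‖u‖ ^ 2 * -RCLike.re ⟪η, opAt (V - 1) v v η⟫ := by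
        rw [mul_pow, norm_sub_one_apply_sq hV, hopAt]; ring
    _ ≤ 2 * ‖u‖ ^ 2 * ‖⟪η, opAt (V - 1) v v η⟫‖ := by
        gcongr; exact (neg_le_abs _).trans (RCLike.abs_re_le_norm _)

end Slice

section Increment

variable {h H E : Type*}
  [NormedAddCommGroup h] [InnerProductSpace ℂ h]
  [NormedAddCommGroup H] [InnerProductSpace ℂ H]
  [NormedAddCommGroup E] [InnerProductSpace ℂ E] [CompleteSpace E]
  {tmul : h →ₗ[ℂ] H →ₗ[ℂ] E} {opAt : (E →L[ℂ] E) → h → h → (H →L[ℂ] H)}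
  {U : ℝ → E →L[ℂ] E} {Ω : H}

noncomputable def increment (opAt : (E →L[ℂ] E) → h → h → (H →L[ℂ] H)) (U : ℝ → E →L[ℂ] E)
    (t : ℝ) (p : Bool × h × h) : H →L[ℂ] H :=
  opAt ((if p.1 then adjoint (U t) else U t) - 1) p.2.1 p.2.2

def GaussianCondition (opAt : (E →L[ℂ] E) → h → h → (H →L[ℂ] H)) (U : ℝ → E →L[ℂ] E)
    (Ω : H) : Prop :=
  ∀ a b c : Bool × h × h, Tendsto (fun t : ℝ => (1 / t) *
    ⟪Ω, (increment opAt U t a * increment opAt U t b * increment opAt U t c) Ω⟫) (𝓝[>] 0) (𝓝 0)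

theorem ite_adjoint_mem_unitary {W : E →L[ℂ] E} (hW : W ∈ unitary (E →L[ℂ] E)) (ε : Bool) :
    (if ε then adjoint W else W) ∈ unitary (E →L[ℂ] E) := by
  cases ε
  exacts [hW, Unitary.star_mem hW]

theorem norm_sub_one_le_two_of_mem_unitary {V : E →L[ℂ] E} (hV : V ∈ unitary (E →L[ℂ] E)) :
    ‖V - 1‖ ≤ 2 := by
  refine opNorm_le_bound _ zero_le_two fun x => ?_
  calc ‖(V - 1) x‖ ≤ ‖V x‖ + ‖x‖ := by rw [sub_apply, one_apply_eq_self]; exact norm_sub_le _ _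
    _ = 2 * ‖x‖ := by rw [norm_map_of_mem_unitary hV]; ring

theorem norm_increment_le
    (htmul : ∀ (u v : h) (ξ ζ : H), ⟪tmul u ξ, tmul v ζ⟫ = ⟪u, v⟫ * ⟪ξ, ζ⟫)
    (hopAt : ∀ (A : E →L[ℂ] E) (u v : h) (ξ₁ ξ₂ : H),
      ⟪ξ₁, opAt A u v ξ₂⟫ = ⟪tmul u ξ₁, A (tmul v ξ₂)⟫)
    {t : ℝ} (hU : U t ∈ unitary (E →L[ℂ] E)) (p : Bool × h × h) :
    ‖increment opAt U t p‖ ≤ 2 * ‖p.2.1‖ * ‖p.2.2‖ := by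
  calc ‖increment opAt U t p‖ ≤ ‖p.2.1‖ * ‖(if p.1 then adjoint (U t) else U t) - 1‖ * ‖p.2.2‖ :=
        norm_opAt_le htmul hopAt _ _ _
    _ ≤ ‖p.2.1‖ * 2 * ‖p.2.2‖ := by
        gcongr; exact norm_sub_one_le_two_of_mem_unitary (ite_adjoint_mem_unitary hU p.1)
    _ = 2 * ‖p.2.1‖ * ‖p.2.2‖ := by ring

theorem norm_list_prod_increment_apply_le
    (htmul : ∀ (u v : h) (ξ ζ : H), ⟪tmul u ξ, tmul v ζ⟫ = ⟪u, v⟫ * ⟪ξ, ζ⟫)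
    (hopAt : ∀ (A : E →L[ℂ] E) (u v : h) (ξ₁ ξ₂ : H),
      ⟪ξ₁, opAt A u v ξ₂⟫ = ⟪tmul u ξ₁, A (tmul v ξ₂)⟫)
    {t : ℝ} (hU : U t ∈ unitary (E →L[ℂ] E)) (l : List (Bool × h × h)) (ξ : H) :
    ‖(l.map (increment opAt U t)).prod ξ‖ ≤ (l.map fun p => 2 * ‖p.2.1‖ * ‖p.2.2‖).prod * ‖ξ‖ := by
  induction l with
  | nil => simp
  | cons p l ih =>
    rw [List.map_cons, List.prod_cons, mul_apply_eq_comp, List.map_cons, List.prod_cons, mul_assoc]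
    calc _ ≤ ‖increment opAt U t p‖ * ‖(l.map (increment opAt U t)).prod ξ‖ := le_opNorm _ _
      _ ≤ _ := by gcongr; exact norm_increment_le htmul hopAt hU p

def dagger {α : Type*} (p : Bool × α × α) : Bool × α × α := (!p.1, p.2.2, p.2.1)

@[simp] theorem dagger_dagger {α : Type*} (p : Bool × α × α) : dagger (dagger p) = p := by
  simp [dagger]

theorem inner_increment_dagger_apply
    (hopAt : ∀ (A : E →L[ℂ] E) (u v : h) (ξ₁ ξ₂ : H),
      ⟪ξ₁, opAt A u v ξ₂⟫ = ⟪tmul u ξ₁, A (tmul v ξ₂)⟫)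
    (t : ℝ) (p : Bool × h × h) (ξ ζ : H) :
    ⟪increment opAt U t (dagger p) ξ, ζ⟫ = ⟪ξ, increment opAt U t p ζ⟫ := by
  obtain ⟨ε, u, v⟩ := p
  have hadj : adjoint ((if ε then adjoint (U t) else U t) - 1)
      = (if !ε then adjoint (U t) else U t) - 1 := by
    cases ε <;> simp [← star_eq_adjoint]
  rw [dagger, increment, increment, ← hadj, inner_opAt_adjoint_apply hopAt]

theorem inner_increment_apply
    (hopAt : ∀ (A : E →L[ℂ] E) (u v : h) (ξ₁ ξ₂ : H),
      ⟪ξ₁, opAt A u v ξ₂⟫ = ⟪tmul u ξ₁, A (tmul v ξ₂)⟫)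
    (t : ℝ) (p : Bool × h × h) (ξ ζ : H) :
    ⟪increment opAt U t p ξ, ζ⟫ = ⟪ξ, increment opAt U t (dagger p) ζ⟫ := by
  simpa using inner_increment_dagger_apply hopAt t (dagger p) ξ ζ

theorem norm_increment_mul_increment_apply_sq_le
    (htmul : ∀ (u v : h) (ξ ζ : H), ⟪tmul u ξ, tmul v ζ⟫ = ⟪u, v⟫ * ⟪ξ, ζ⟫)
    (hopAt : ∀ (A : E →L[ℂ] E) (u v : h) (ξ₁ ξ₂ : H),
      ⟪ξ₁, opAt A u v ξ₂⟫ = ⟪tmul u ξ₁, A (tmul v ξ₂)⟫)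
    {t : ℝ} (hU : U t ∈ unitary (E →L[ℂ] E)) (a b : Bool × h × h) :
    ‖(increment opAt U t a * increment opAt U t b) Ω‖ ^ 2 ≤ 2 * ‖a.2.1‖ ^ 2 *
      ‖⟪Ω, (increment opAt U t (dagger b) * increment opAt U t (a.1, a.2.2, a.2.2) *
        increment opAt U t b) Ω⟫‖ := by
  have hV := norm_map_of_mem_unitary (ite_adjoint_mem_unitary hU a.1)
  set η := increment opAt U t b Ω
  calc _ ≤ 2 * ‖a.2.1‖ ^ 2 * ‖⟪η, increment opAt U t (a.1, a.2.2, a.2.2) η⟫‖ :=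
        norm_opAt_sub_one_apply_sq_le htmul hopAt hV _ _ _
    _ = _ := by rw [inner_increment_apply hopAt]; rfl

theorem norm_inner_increment_prod_le
    (htmul : ∀ (u v : h) (ξ ζ : H), ⟪tmul u ξ, tmul v ζ⟫ = ⟪u, v⟫ * ⟪ξ, ζ⟫)
    (hopAt : ∀ (A : E →L[ℂ] E) (u v : h) (ξ₁ ξ₂ : H),
      ⟪ξ₁, opAt A u v ξ₂⟫ = ⟪tmul u ξ₁, A (tmul v ξ₂)⟫)
    {t : ℝ} (hU : U t ∈ unitary (E →L[ℂ] E)) (a b c d : Bool × h × h) (m : List (Bool × h × h)) :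
    ‖⟪Ω, ((a :: b :: (m ++ [c, d])).map (increment opAt U t)).prod Ω⟫‖ ≤
      (m.map fun p => 2 * ‖p.2.1‖ * ‖p.2.2‖).prod / 2 *
        (‖(increment opAt U t (dagger b) * increment opAt U t (dagger a)) Ω‖ ^ 2 +
          ‖(increment opAt U t c * increment opAt U t d) Ω‖ ^ 2) := by
  set X := (increment opAt U t (dagger b) * increment opAt U t (dagger a)) Ω
  set Y := (increment opAt U t c * increment opAt U t d) Ω
  set K := (m.map fun p => 2 * ‖p.2.1‖ * ‖p.2.2‖).prod
  have hK : 0 ≤ K := List.prod_nonneg fun x hx => by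
    obtain ⟨p, -, rfl⟩ := List.mem_map.mp hx
    positivity
  have hsplit : ⟪Ω, ((a :: b :: (m ++ [c, d])).map (increment opAt U t)).prod Ω⟫
      = ⟪X, (m.map (increment opAt U t)).prod Y⟫ := by
    simp only [List.map_cons, List.map_append, List.map_nil, List.prod_cons, List.prod_append,
      List.prod_nil, mul_one, mul_apply_eq_comp, X, Y]
    rw [← inner_increment_dagger_apply hopAt t a, ← inner_increment_dagger_apply hopAt t b]
  calc _ = ‖⟪X, (m.map (increment opAt U t)).prod Y⟫‖ := by rw [hsplit]
    _ ≤ ‖X‖ * ‖(m.map (increment opAt U t)).prod Y‖ := norm_inner_le_norm _ _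
    _ ≤ ‖X‖ * (K * ‖Y‖) := by gcongr; exact norm_list_prod_increment_apply_le htmul hopAt hU m Y
    _ ≤ K / 2 * (‖X‖ ^ 2 + ‖Y‖ ^ 2) := by nlinarith [two_mul_le_add_sq ‖X‖ ‖Y‖]

theorem tendsto_norm_increment_mul_increment_apply_sq
    (htmul : ∀ (u v : h) (ξ ζ : H), ⟪tmul u ξ, tmul v ζ⟫ = ⟪u, v⟫ * ⟪ξ, ζ⟫)
    (hopAt : ∀ (A : E →L[ℂ] E) (u v : h) (ξ₁ ξ₂ : H),
      ⟪ξ₁, opAt A u v ξ₂⟫ = ⟪tmul u ξ₁, A (tmul v ξ₂)⟫)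
    (hU : ∀ t, 0 < t → U t ∈ unitary (E →L[ℂ] E)) (hC : GaussianCondition opAt U Ω)
    (a b : Bool × h × h) :
    Tendsto (fun t : ℝ => 1 / t * ‖(increment opAt U t a * increment opAt U t b) Ω‖ ^ 2)
      (𝓝[>] 0) (𝓝 0) := by
  have hlim := (hC (dagger b) (a.1, a.2.2, a.2.2) b).norm.const_mul (2 * ‖a.2.1‖ ^ 2)
  rw [norm_zero, mul_zero] at hlim
  refine squeeze_zero' ?_ ?_ hlim <;> filter_upwards [self_mem_nhdsWithin] with t (ht : 0 < t)
  · exact mul_nonneg (one_div_nonneg.mpr ht.le) (sq_nonneg _)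
  calc _ ≤ 1 / t * (2 * ‖a.2.1‖ ^ 2 *
        ‖⟪Ω, (increment opAt U t (dagger b) * increment opAt U t (a.1, a.2.2, a.2.2) *
          increment opAt U t b) Ω⟫‖) := by
        gcongr; exact norm_increment_mul_increment_apply_sq_le htmul hopAt (hU t ht) a b
    _ = _ := by rw [Complex.norm_one_div_ofReal_mul ht.le]; ring

theorem tendsto_inner_increment_prod_of_four_le
    (htmul : ∀ (u v : h) (ξ ζ : H), ⟪tmul u ξ, tmul v ζ⟫ = ⟪u, v⟫ * ⟪ξ, ζ⟫)
    (hopAt : ∀ (A : E →L[ℂ] E) (u v : h) (ξ₁ ξ₂ : H),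
      ⟪ξ₁, opAt A u v ξ₂⟫ = ⟪tmul u ξ₁, A (tmul v ξ₂)⟫)
    (hU : ∀ t, 0 < t → U t ∈ unitary (E →L[ℂ] E)) (hC : GaussianCondition opAt U Ω)
    {l : List (Bool × h × h)} (hl : 4 ≤ l.length) :
    Tendsto (fun t : ℝ => (1 / t) * ⟪Ω, (l.map (increment opAt U t)).prod Ω⟫) (𝓝[>] 0) (𝓝 0) := by
  obtain ⟨a, b, c, d, m, rfl⟩ := List.exists_eq_cons_cons_append_pair hl
  set K := (m.map fun p => 2 * ‖p.2.1‖ * ‖p.2.2‖).prod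
  have hlim := ((tendsto_norm_increment_mul_increment_apply_sq htmul hopAt hU hC
    (dagger b) (dagger a)).add
      (tendsto_norm_increment_mul_increment_apply_sq htmul hopAt hU hC c d)).const_mul (K / 2)
  rw [add_zero, mul_zero] at hlim
  rw [tendsto_zero_iff_norm_tendsto_zero]
  refine squeeze_zero' (.of_forall fun t => norm_nonneg _) ?_ hlim
  filter_upwards [self_mem_nhdsWithin] with t (ht : 0 < t)
  rw [Complex.norm_one_div_ofReal_mul ht.le]
  calc _ ≤ 1 / t * (K / 2 *
        (‖(increment opAt U t (dagger b) * increment opAt U t (dagger a)) Ω‖ ^ 2 +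
          ‖(increment opAt U t c * increment opAt U t d) Ω‖ ^ 2)) := by
        gcongr; exact norm_inner_increment_prod_le htmul hopAt (hU t ht) a b c d m
    _ = _ := by ring

theorem GaussianCondition.tendsto_inner_increment_prod
    (htmul : ∀ (u v : h) (ξ ζ : H), ⟪tmul u ξ, tmul v ζ⟫ = ⟪u, v⟫ * ⟪ξ, ζ⟫)
    (hopAt : ∀ (A : E →L[ℂ] E) (u v : h) (ξ₁ ξ₂ : H),
      ⟪ξ₁, opAt A u v ξ₂⟫ = ⟪tmul u ξ₁, A (tmul v ξ₂)⟫)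
    (hU : ∀ t, 0 < t → U t ∈ unitary (E →L[ℂ] E)) (hC : GaussianCondition opAt U Ω)
    {l : List (Bool × h × h)} (hl : 3 ≤ l.length) :
    Tendsto (fun t : ℝ => (1 / t) * ⟪Ω, (l.map (increment opAt U t)).prod Ω⟫) (𝓝[>] 0) (𝓝 0) := by
  rcases hl.eq_or_lt with h3 | h4
  · obtain ⟨a, b, c, rfl⟩ := List.length_eq_three.mp h3.symm
    simpa [mul_assoc] using hC a b c
  · exact tendsto_inner_increment_prod_of_four_le htmul hopAt hU hC h4

end Increment

theorem stmt14_general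
    {h H E : Type*}
    [NormedAddCommGroup h] [InnerProductSpace ℂ h]
    [NormedAddCommGroup H] [InnerProductSpace ℂ H]
    [NormedAddCommGroup E] [InnerProductSpace ℂ E] [CompleteSpace E]
    (tmul : h →ₗ[ℂ] H →ₗ[ℂ] E)
    (htmul : ∀ (u v : h) (ξ ζ : H), ⟪tmul u ξ, tmul v ζ⟫ = ⟪u, v⟫ * ⟪ξ, ζ⟫)
    (opAt : (E →L[ℂ] E) → h → h → (H →L[ℂ] H))
    (hopAt : ∀ (A : E →L[ℂ] E) (u v : h) (ξ₁ ξ₂ : H),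
      ⟪ξ₁, opAt A u v ξ₂⟫ = ⟪tmul u ξ₁, A (tmul v ξ₂)⟫)
    (Ω : H)
    (U : ℝ → (E →L[ℂ] E))
    (hUunitary : ∀ t : ℝ, 0 ≤ t → adjoint (U t) * U t = 1 ∧ U t * adjoint (U t) = 1)
    -- (C) Gaussian condition
    (hC : ∀ (u₁ v₁ u₂ v₂ u₃ v₃ : h) (ε₁ ε₂ ε₃ : Bool),
      Tendsto (fun t : ℝ => (1 / t) *
          ⟪Ω, ((opAt ((if ε₁ then adjoint (U t) else U t) - 1) u₁ v₁) *
               (opAt ((if ε₂ then adjoint (U t) else U t) - 1) u₂ v₂) *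
               (opAt ((if ε₃ then adjoint (U t) else U t) - 1) u₃ v₃)) Ω⟫)
        (nhdsWithin 0 (Set.Ioi 0)) (nhds 0))
    (n : ℕ) (hn : 3 ≤ n)
    (u v : Fin n → h) (ε : Fin n → Bool) :
    Tendsto (fun t : ℝ => (1 / t) *
        ⟪Ω, ((List.ofFn fun i =>
            opAt ((if ε i then adjoint (U t) else U t) - 1) (u i) (v i)).prod) Ω⟫)
      (nhdsWithin 0 (Set.Ioi 0)) (nhds 0) := by
  have hGauss : GaussianCondition opAt U Ω := fun a b c =>
    hC a.2.1 a.2.2 b.2.1 b.2.2 c.2.1 c.2.2 a.1 b.1 c.1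
  have hlim := hGauss.tendsto_inner_increment_prod htmul hopAt (fun t ht => hUunitary t ht.le)
    (l := List.ofFn fun i => (ε i, u i, v i)) (by simpa using hn)
  simpa only [List.map_ofFn, Function.comp_def, increment] using hlim

theorem stmt14
    {h H E : Type*}
    [NormedAddCommGroup h] [InnerProductSpace ℂ h] [CompleteSpace h]
    [TopologicalSpace.SeparableSpace h]
    [NormedAddCommGroup H] [InnerProductSpace ℂ H] [CompleteSpace H]
    [TopologicalSpace.SeparableSpace H]
    [NormedAddCommGroup E] [InnerProductSpace ℂ E] [CompleteSpace E]
    (tmul : h →ₗ[ℂ] H →ₗ[ℂ] E)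
    (htmul : ∀ (u v : h) (ξ ζ : H), ⟪tmul u ξ, tmul v ζ⟫ = ⟪u, v⟫ * ⟪ξ, ζ⟫)
    (hdense : (Submodule.span ℂ (Set.range fun p : h × H => tmul p.1 p.2)).topologicalClosure = ⊤)
    (opAt : (E →L[ℂ] E) → h → h → (H →L[ℂ] H))
    (hopAt : ∀ (A : E →L[ℂ] E) (u v : h) (ξ₁ ξ₂ : H),
      ⟪ξ₁, opAt A u v ξ₂⟫ = ⟪tmul u ξ₁, A (tmul v ξ₂)⟫)
    (Ω : H) (hΩ : ‖Ω‖ = 1)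
    (U : ℝ → (E →L[ℂ] E))
    (hUunitary : ∀ t : ℝ, 0 ≤ t → adjoint (U t) * U t = 1 ∧ U t * adjoint (U t) = 1)
    -- (C) Gaussian condition
    (hC : ∀ (u₁ v₁ u₂ v₂ u₃ v₃ : h) (ε₁ ε₂ ε₃ : Bool),
      Tendsto (fun t : ℝ => (1 / t) *
          ⟪Ω, ((opAt ((if ε₁ then adjoint (U t) else U t) - 1) u₁ v₁) *
               (opAt ((if ε₂ then adjoint (U t) else U t) - 1) u₂ v₂) *
               (opAt ((if ε₃ then adjoint (U t) else U t) - 1) u₃ v₃)) Ω⟫)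
        (nhdsWithin 0 (Set.Ioi 0)) (nhds 0))
    (n : ℕ) (hn : 3 ≤ n)
    (u v : Fin n → h) (ε : Fin n → Bool) :
    Tendsto (fun t : ℝ => (1 / t) *
        ⟪Ω, ((List.ofFn fun i =>
            opAt ((if ε i then adjoint (U t) else U t) - 1) (u i) (v i)).prod) Ω⟫)
      (nhdsWithin 0 (Set.Ioi 0)) (nhds 0) :=
  stmt14_general tmul htmul opAt hopAt Ω U hUunitary hC n hn u v ε
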